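/- arXiv:1810.01038 — 11 statements merged into one kernel-verified Lean document; each statement's English description precedes it below -/
import Mathlib

section
/- Let q be a prime number, let l ≥ 1 be an integer, and let α be a nonzero rational number whose numerator α₁ = α.num is coprime to q (gcd(α₁, q) = 1). Writing α₂ = α.den, we have: α ∈ ℚ-KS(qˡ) if and only if the integer α₂·q − α₁ divides q^{l−1} − 1. -/
/-!
Write `d = α₂ q - α₁`. Since `α₂ q^(m+1) - α₁ = q^m d + α₁ (q^m - 1)`, the Korselt condition
at `q` says `d ∣ α₁ (q^m - 1)`, and `d` is coprime to `α₁` because `α₁` is coprime to both `α₂`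
and `q`. The condition `α ≠ q^l` is automatic, as `q` does not divide `α₁`.
-/

/-- `α` is an `N`-Korselt base: `α ≠ 0`, `α ≠ N`, and for every prime `p` dividing `N`,
`α.den * p - α.num` divides `α.den * N - α.num`. -/
def QKS (N : ℕ) (α : ℚ) : Prop :=
  α ≠ 0 ∧ α ≠ (N : ℚ) ∧
    ∀ p : ℕ, p.Prime → p ∣ N →
      ((α.den : ℤ) * p - α.num) ∣ ((α.den : ℤ) * N - α.num)

theorem qks_prime_pow_iff {q : ℕ} (hq : q.Prime) {l : ℕ} (hl : 1 ≤ l) (α : ℚ) :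
    QKS (q ^ l) α ↔ α ≠ 0 ∧ α ≠ ((q ^ l : ℕ) : ℚ) ∧
      ((α.den : ℤ) * q - α.num) ∣ ((α.den : ℤ) * (q ^ l : ℕ) - α.num) := by
  refine and_congr_right' (and_congr_right' ⟨fun h ↦ h q hq (dvd_pow_self q (by omega)), ?_⟩)
  intro h p hp hpq
  rwa [(Nat.prime_dvd_prime_iff_eq hp hq).mp (hp.dvd_of_dvd_pow hpq)]

theorem Rat.ne_natCast_pow_of_gcd_num_eq_one {q : ℕ} (hq : q.Prime) {l : ℕ} (hl : 1 ≤ l)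
    {α : ℚ} (hcop : Int.gcd α.num (q : ℤ) = 1) : α ≠ ((q ^ l : ℕ) : ℚ) := by
  rintro rfl
  have hq_dvd : (q : ℤ) ∣ Int.gcd ((q ^ l : ℕ) : ℚ).num (q : ℤ) :=
    Int.dvd_coe_gcd (by simpa using dvd_pow_self (q : ℤ) (by omega)) dvd_rfl
  rw [hcop, Nat.cast_one, Int.natCast_dvd_ofNat] at hq_dvd
  exact hq.one_lt.ne' (Nat.dvd_one.mp hq_dvd)

theorem Rat.isCoprime_den_mul_sub_num (α : ℚ) {n : ℤ} (h : IsCoprime α.num n) :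
    IsCoprime ((α.den : ℤ) * n - α.num) α.num := by
  have hden : IsCoprime α.num α.den := Int.isCoprime_iff_gcd_eq_one.mpr α.reduced
  simpa [sub_eq_add_neg] using ((hden.mul_right h).symm.add_mul_left_left (-1))

theorem sub_dvd_mul_pow_succ_sub_iff {a b q : ℤ} (h : IsCoprime (b * q - a) a) (m : ℕ) :
    b * q - a ∣ b * q ^ (m + 1) - a ↔ b * q - a ∣ q ^ m - 1 := by
  have key : b * q ^ (m + 1) - a = (b * q - a) * q ^ m + a * (q ^ m - 1) := by ring
  rw [key, dvd_add_right (dvd_mul_right _ _)]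
  exact ⟨h.dvd_of_dvd_mul_left, fun h' ↦ h'.mul_left a⟩

theorem stmt_0 (q : ℕ) (hq : q.Prime) (l : ℕ) (hl : 1 ≤ l) (α : ℚ) (hα : α ≠ 0)
    (hcop : Int.gcd α.num (q : ℤ) = 1) :
    QKS (q ^ l) α ↔ ((α.den : ℤ) * q - α.num) ∣ ((q : ℤ) ^ (l - 1) - 1) := by
  have hd : IsCoprime ((α.den : ℤ) * q - α.num) α.num :=
    α.isCoprime_den_mul_sub_num (Int.isCoprime_iff_gcd_eq_one.mpr hcop)
  obtain ⟨m, rfl⟩ : ∃ m, l = m + 1 := ⟨l - 1, by omega⟩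
  rw [qks_prime_pow_iff hq hl, Nat.add_sub_cancel, ← sub_dvd_mul_pow_succ_sub_iff hd,
    ← Nat.cast_pow]
  exact ⟨fun h ↦ h.2.2,
    fun h ↦ ⟨hα, Rat.ne_natCast_pow_of_gcd_num_eq_one hq hl hcop, h⟩⟩
end

section
/- Let q be a prime number, let l ≥ 2 be an integer, and let α ∈ ℚ-KS(qˡ) be such that q divides α.num. Then the rational number α′ = α/q satisfies 2 − q^{l−1} ≤ α′ ≤ (q^{l−1} + 1)/2. -/
/-!
Write `α = q n / b` in lowest terms, so that `α / q = n / b` is again in lowest terms. Cancelling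
`q` from the Korselt condition `q (b - n) ∣ q (b q^(l-1) - n)` and reducing modulo `b - n`, which is
coprime to `n`, leaves `b - n ∣ q^(l-1) - 1`. Hence `α / q = 1 - (b - n) / b` differs from `1` by at
most `q^(l-1) - 1`, and by at most half of it unless `b = 1` and `n - 1 = q^(l-1) - 1`, which is the
excluded base `α = q^l`.
-/

theorem sub_dvd_sub_one_of_dvd_mul_sub {R : Type*} [CommRing R] {a b Q : R}
    (hba : IsCoprime b a) (h : b - a ∣ b * Q - a) : b - a ∣ Q - 1 := by
  have hcop : IsCoprime (b - a) a := by simpa [sub_eq_add_neg] using hba.add_mul_right_left (-1)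
  refine hcop.dvd_of_dvd_mul_left ?_
  have hdiff : a * (Q - 1) = b * Q - a - (b - a) * Q := by ring
  rw [hdiff]
  exact h.sub (dvd_mul_right _ _)

theorem Int.two_mul_le_of_dvd_of_ne {k n : ℤ} (hk : 0 < k) (hn : 0 < n) (hdvd : k ∣ n)
    (hne : k ≠ n) : 2 * k ≤ n := by
  obtain ⟨c, rfl⟩ := hdvd
  have hc : 0 < c := pos_of_mul_pos_right hn hk.le
  have hc1 : c ≠ 1 := by rintro rfl; simp at hne
  nlinarith [show 2 ≤ c by omega]

namespace Rat

theorem div_intCast_eq_of_num_eq_mul {α : ℚ} {q n : ℤ} (hq : q ≠ 0) (hn : α.num = q * n) :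
    α / q = n / α.den := by
  nth_rewrite 1 [← num_div_den α]
  rw [hn]
  push_cast
  field_simp

theorem isCoprime_den_of_num_eq_mul {α : ℚ} {q n : ℤ} (hn : α.num = q * n) :
    IsCoprime (α.den : ℤ) n :=
  (α.isCoprime_num_den.symm).of_isCoprime_of_dvd_right ⟨q, by rw [hn, mul_comm]⟩

theorem num_div_intCast_of_num_eq_mul {α : ℚ} {q n : ℤ} (hq : q ≠ 0) (hn : α.num = q * n) :
    (α / q).num = n := by
  rw [div_intCast_eq_of_num_eq_mul hq hn]
  exact num_div_eq_of_coprime (by exact_mod_cast α.den_pos)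
    (Int.isCoprime_iff_gcd_eq_one.mp (isCoprime_den_of_num_eq_mul hn).symm)

theorem den_div_intCast_of_num_eq_mul {α : ℚ} {q n : ℤ} (hq : q ≠ 0) (hn : α.num = q * n) :
    (α / q).den = α.den := by
  rw [div_intCast_eq_of_num_eq_mul hq hn]
  exact_mod_cast den_div_eq_of_coprime (by exact_mod_cast α.den_pos)
    (Int.isCoprime_iff_gcd_eq_one.mp (isCoprime_den_of_num_eq_mul hn).symm)

variable {β : ℚ} {Q : ℤ}

theorem sub_le_of_den_sub_num_dvd (hQ : 2 ≤ Q) (hdvd : (β.den : ℤ) - β.num ∣ Q - 1) :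
    2 - (Q : ℚ) ≤ β := by
  have hd : (β.den : ℤ) - β.num ≤ Q - 1 := Int.le_of_dvd (by omega) hdvd
  have hb : (1 : ℤ) ≤ β.den := by exact_mod_cast β.den_pos
  have hint : (2 - Q) * β.den ≤ β.num := by nlinarith
  rw [← num_div_den β, le_div_iff₀ (by positivity)]
  exact_mod_cast hint

theorem le_of_den_sub_num_dvd (hQ : 2 ≤ Q) (hdvd : (β.den : ℤ) - β.num ∣ Q - 1)
    (hβ : β ≠ Q) : β ≤ ((Q : ℚ) + 1) / 2 := by
  have hdvd' : β.num - β.den ∣ Q - 1 := neg_sub (β.den : ℤ) β.num ▸ neg_dvd.mpr hdvd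
  have hd : β.num - β.den ≤ Q - 1 := Int.le_of_dvd (by omega) hdvd'
  have hint : β.num * 2 ≤ (Q + 1) * β.den := by
    rcases (show (1 : ℤ) ≤ β.den by exact_mod_cast β.den_pos).eq_or_lt with hb | hb
    · have hden : β.den = 1 := by exact_mod_cast hb.symm
      have hnum : β.num ≠ Q := fun h ↦ hβ (by rw [← coe_int_num_of_den_eq_one hden, h])
      rw [← hb]
      rcases le_or_gt β.num 1 with h1 | h1
      · omega
      · have := Int.two_mul_le_of_dvd_of_ne (by omega) (by omega)
          (by rwa [hden, Nat.cast_one] at hdvd') (by omega : β.num - 1 ≠ Q - 1)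
        omega
    · nlinarith
  rw [← num_div_den β, div_le_div_iff₀ (by positivity) two_pos]
  exact_mod_cast hint

end Rat

theorem stmt_2 (q : ℕ) (hq : q.Prime) (l : ℕ) (hl : 2 ≤ l) (α : ℚ)
    (hα : QKS (q ^ l) α) (hdvd : (q : ℤ) ∣ α.num) :
    2 - (q : ℚ) ^ (l - 1) ≤ α / q ∧ α / q ≤ ((q : ℚ) ^ (l - 1) + 1) / 2 := by
  obtain ⟨-, hαN, hKS⟩ := hα
  obtain ⟨n, hn⟩ := hdvd
  have hq0 : (q : ℤ) ≠ 0 := by exact_mod_cast hq.ne_zero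
  set Q : ℤ := (q : ℤ) ^ (l - 1) with hQ
  have hQ2 : 2 ≤ Q :=
    calc 2 ≤ (q : ℤ) := by exact_mod_cast hq.two_le
      _ ≤ Q := le_self_pow₀ (by exact_mod_cast hq.one_le) (by omega)
  have hql : (q : ℤ) ^ l = q * Q := by rw [hQ, ← pow_succ']; congr 1; omega
  have hnum : (α / q).num = n := by simpa using Rat.num_div_intCast_of_num_eq_mul hq0 hn
  have hden : (α / q).den = α.den := by simpa using Rat.den_div_intCast_of_num_eq_mul hq0 hn
  have hkorselt : (q : ℤ) * (α.den - n) ∣ q * (α.den * Q - n) := by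
    convert hKS q hq (dvd_pow_self q (by omega)) using 1
    · rw [hn]; ring
    · push_cast; rw [hql, hn]; ring
  have hdvdQ : ((α / q).den : ℤ) - (α / q).num ∣ Q - 1 := by
    rw [hnum, hden]
    exact sub_dvd_sub_one_of_dvd_mul_sub (Rat.isCoprime_den_of_num_eq_mul hn)
      ((mul_dvd_mul_iff_left hq0).mp hkorselt)
  have hne : α / q ≠ Q := by
    intro h
    apply hαN
    rw [div_eq_iff (by exact_mod_cast hq.ne_zero)] at h
    rw [h]
    exact_mod_cast (hql.trans (mul_comm _ _)).symm
  have hcast : (q : ℚ) ^ (l - 1) = Q := by simp [hQ]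
  rw [hcast]
  exact ⟨Rat.sub_le_of_den_sub_num_dvd hQ2 hdvdQ, Rat.le_of_den_sub_num_dvd hQ2 hdvdQ hne⟩
end

section
/- Let q be a prime number, let l ≥ 2 be an integer, and let α ∈ ℚ-KS(qˡ) be such that gcd(α.num, q) = 1. Then 1 + q − q^{l−1} ≤ α ≤ q^{l−1} + q − 1 (inequalities of rational numbers). -/
/-!
Write `α = a / d` and `D = d q - a`. The Korselt condition `D ∣ d q^(m+1) - a` together with
`D ∣ q^m D` gives `D ∣ a (q^m - 1)`. Since `a` is prime to both `d` and `q`, it is prime to `D`,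
so `D ∣ q^m - 1` and hence `|d q - a| ≤ q^m - 1`. Dividing by `d ≥ 1` bounds `|α - q|` by the
same quantity.
-/

lemma dvd_mul_pow_sub_one_of_dvd {d a q : ℤ} {m : ℕ} (h : d * q - a ∣ d * q ^ (m + 1) - a) :
    d * q - a ∣ a * (q ^ m - 1) := by
  have key : a * (q ^ m - 1) = (d * q ^ (m + 1) - a) - q ^ m * (d * q - a) := by ring
  rw [key]
  exact dvd_sub h (dvd_mul_left _ _)

lemma isCoprime_mul_sub_self {d a q : ℤ} (hd : IsCoprime d a) (hq : IsCoprime q a) :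
    IsCoprime (d * q - a) a := by
  simpa using IsCoprime.sub_mul_left_left_iff (z := 1) |>.mpr (hd.mul_left hq)

lemma Rat.isCoprime_den_num (α : ℚ) : IsCoprime (α.den : ℤ) α.num := by
  rw [Int.isCoprime_iff_gcd_eq_one, Int.gcd_comm]
  exact α.reduced

lemma Rat.abs_sub_intCast_le (α : ℚ) (x : ℤ) : |α - x| ≤ |((α.den * x - α.num : ℤ) : ℚ)| := by
  have hden : (1 : ℚ) ≤ α.den := mod_cast α.pos
  have hsub : α - x = -(((α.den * x - α.num : ℤ) : ℚ) / α.den) := by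
    push_cast
    nth_rewrite 1 [← Rat.num_div_den α]
    field_simp
    ring
  rw [hsub, abs_neg, abs_div, abs_of_pos (by positivity : (0 : ℚ) < α.den)]
  exact div_le_self (abs_nonneg _) hden

lemma QKS.den_mul_sub_num_dvd_pow_sub_one {q m : ℕ} {α : ℚ} (hq : q.Prime)
    (hα : QKS (q ^ (m + 1)) α) (hcop : Int.gcd α.num q = 1) :
    ((α.den : ℤ) * q - α.num) ∣ (q : ℤ) ^ m - 1 := by
  have hkorselt := hα.2.2 q hq (dvd_pow_self q m.succ_ne_zero)
  push_cast at hkorselt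
  have hqa : IsCoprime (q : ℤ) α.num := by
    rwa [Int.isCoprime_iff_gcd_eq_one, Int.gcd_comm]
  exact (isCoprime_mul_sub_self α.isCoprime_den_num hqa).dvd_of_dvd_mul_left
    (dvd_mul_pow_sub_one_of_dvd hkorselt)

theorem stmt_3 (q : ℕ) (hq : q.Prime) (l : ℕ) (hl : 2 ≤ l) (α : ℚ)
    (hα : QKS (q ^ l) α) (hcop : Int.gcd α.num (q : ℤ) = 1) :
    1 + (q : ℚ) - (q : ℚ) ^ (l - 1) ≤ α ∧ α ≤ (q : ℚ) ^ (l - 1) + q - 1 := by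
  obtain ⟨m, rfl⟩ : ∃ m, l = m + 1 := ⟨l - 1, by omega⟩
  rw [Nat.add_sub_cancel]
  have hpow : (1 : ℤ) < (q : ℤ) ^ m :=
    one_lt_pow₀ (mod_cast hq.one_lt) (by omega)
  have hD : |(α.den : ℤ) * q - α.num| ≤ (q : ℤ) ^ m - 1 :=
    Int.le_of_dvd (by omega) ((abs_dvd _ _).mpr (hα.den_mul_sub_num_dvd_pow_sub_one hq hcop))
  have hdist : |α - q| ≤ (q : ℚ) ^ m - 1 :=
    (α.abs_sub_intCast_le q).trans (by exact_mod_cast hD)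
  constructor <;> linarith [abs_sub_le_iff.mp hdist]
end

section
/- A rational number α belongs to ℚ-KS(q^t) for every prime number q and every integer t ≥ 2 if and only if α = 1. Equivalently, the intersection over all primes q and all integers t ≥ 2 of the sets ℚ-KS(q^t) equals {1}. -/
theorem dvd_mul_sub_of_dvd_mul_sq_sub {R : Type*} [CommRing R] {a b q : R}
    (h : b * q - a ∣ b * q ^ 2 - a) : b * q - a ∣ a * (a - b) := by
  have hsq : b * q - a ∣ (b * q) ^ 2 - a ^ 2 := sub_dvd_pow_sub_pow _ _ 2
  have hrewrite : a * (a - b) = b * (b * q ^ 2 - a) - ((b * q) ^ 2 - a ^ 2) := by ring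
  rw [hrewrite]
  exact (h.mul_left b).sub hsq

theorem eq_zero_of_forall_prime_mul_sub_dvd {a b c : ℤ} (hb : 0 < b)
    (h : ∀ q : ℕ, q.Prime → b * q - a ∣ c) : c = 0 := by
  obtain ⟨q, hq_large, hq⟩ := Nat.exists_infinite_primes (a.natAbs + c.natAbs + 1)
  apply Int.eq_zero_of_abs_lt_dvd (h q hq)
  have hq_large' : (a.natAbs : ℤ) + c.natAbs + 1 ≤ q := by exact_mod_cast hq_large
  have hbq : (q : ℤ) ≤ b * q := le_mul_of_one_le_left (by positivity) hb
  have ha : a ≤ (a.natAbs : ℤ) := Int.le_natAbs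
  rw [Int.abs_eq_natAbs]
  omega

theorem Rat.eq_one_of_num_eq_den {α : ℚ} (h : α.num = α.den) : α = 1 := by
  rw [← α.num_div_den, h, Int.cast_natCast, div_self (by exact_mod_cast α.den_ne_zero)]

theorem mul_sub_dvd_num_mul_sub_of_QKS_sq {α : ℚ} {q : ℕ} (hq : q.Prime)
    (h : QKS (q ^ 2) α) : (α.den : ℤ) * q - α.num ∣ α.num * (α.num - α.den) := by
  apply dvd_mul_sub_of_dvd_mul_sq_sub
  simpa using h.2.2 q hq (dvd_pow_self q two_ne_zero)

theorem eq_one_of_forall_prime_QKS_sq {α : ℚ} (h : ∀ q : ℕ, q.Prime → QKS (q ^ 2) α) : α = 1 := by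
  have hnum : α.num ≠ 0 := Rat.num_ne_zero.mpr (h 2 Nat.prime_two).1
  have hprod : α.num * (α.num - α.den) = 0 :=
    eq_zero_of_forall_prime_mul_sub_dvd (by exact_mod_cast α.den_pos)
      fun q hq ↦ mul_sub_dvd_num_mul_sub_of_QKS_sq hq (h q hq)
  exact Rat.eq_one_of_num_eq_den <| sub_eq_zero.mp <| (mul_eq_zero.mp hprod).resolve_left hnum

theorem QKS_one_prime_pow {q t : ℕ} (hq : q.Prime) (ht : t ≠ 0) : QKS (q ^ t) 1 := by
  refine ⟨one_ne_zero, ?_, fun p hp hpq ↦ ?_⟩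
  · exact_mod_cast (Nat.one_lt_pow ht hq.one_lt).ne
  · rw [(Nat.prime_dvd_prime_iff_eq hp hq).mp (hp.dvd_of_dvd_pow hpq)]
    simpa using sub_one_dvd_pow_sub_one (q : ℤ) t

theorem stmt_6 (α : ℚ) :
    (∀ q t : ℕ, q.Prime → 2 ≤ t → QKS (q ^ t) α) ↔ α = 1 := by
  constructor
  · exact fun h ↦ eq_one_of_forall_prime_QKS_sq fun q hq ↦ h q 2 hq le_rfl
  · rintro rfl q t hq ht
    exact QKS_one_prime_pow hq (by omega)
end

section
/- Let q be a prime number and l ≥ 2 an integer. An integer β belongs to ℤ-KS(qˡ) if and only if β ≠ 0, β ≠ qˡ, and there exists a positive integer d dividing qˡ − q such that β = q + d or β = q − d. -/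
/-- `β` is an integer `N`-Korselt base: `β ≠ 0`, `β ≠ N`, and for every prime `p`
dividing `N`, `p - β` divides `N - β`. -/
def ZKS (N : ℕ) (β : ℤ) : Prop :=
  β ≠ 0 ∧ β ≠ (N : ℤ) ∧
    ∀ p : ℕ, p.Prime → p ∣ N → ((p : ℤ) - β) ∣ ((N : ℤ) - β)

/-
For `N = qˡ` the only prime to test is `q`, and `q - β ∣ qˡ - β` is the same as
`q - β ∣ qˡ - q`. The nonzero divisors `±d` of `qˡ - q` then give exactly the bases
`β = q ∓ d`; the value `β = q` would force `0 ∣ qˡ - q`, i.e. `β = qˡ`, which is excluded.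
-/

theorem sub_dvd_sub_iff_sub_dvd_sub {R : Type*} [Ring R] (a b c : R) :
    a - c ∣ b - c ↔ a - c ∣ b - a := by
  rw [← dvd_sub_right (dvd_refl (a - c)), sub_sub_sub_cancel_right, dvd_sub_comm]

theorem Nat.Prime.eq_of_prime_dvd_pow {p q l : ℕ} (hp : p.Prime) (hq : q.Prime)
    (h : p ∣ q ^ l) : p = q :=
  (Nat.prime_dvd_prime_iff_eq hp hq).mp (hp.dvd_of_dvd_pow h)

theorem zks_prime_pow_iff {q l : ℕ} (hq : q.Prime) (hl : l ≠ 0) (β : ℤ) :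
    ZKS (q ^ l) β ↔ β ≠ 0 ∧ β ≠ (q : ℤ) ^ l ∧ (q : ℤ) - β ∣ (q : ℤ) ^ l - q := by
  unfold ZKS
  push_cast
  refine and_congr_right fun _ => and_congr_right fun _ => ?_
  rw [← sub_dvd_sub_iff_sub_dvd_sub]
  refine ⟨fun h => h q hq (dvd_pow_self q hl), ?_⟩
  rintro h p hp hpq
  rwa [hp.eq_of_prime_dvd_pow hq hpq]

theorem exists_pos_dvd_and_eq_add_or_sub_iff (a m β : ℤ) :
    (∃ d : ℤ, 0 < d ∧ d ∣ m ∧ (β = a + d ∨ β = a - d)) ↔ β ≠ a ∧ a - β ∣ m := by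
  constructor
  · rintro ⟨d, hd, hdm, rfl | rfl⟩
    · exact ⟨by omega, by rwa [sub_add_cancel_left, neg_dvd]⟩
    · exact ⟨by omega, by rwa [sub_sub_cancel]⟩
  · rintro ⟨hβa, hdvd⟩
    rcases hβa.lt_or_gt with hlt | hgt
    · exact ⟨a - β, by omega, hdvd, Or.inr (by ring)⟩
    · exact ⟨β - a, by omega, by rwa [← neg_sub, neg_dvd], Or.inl (by ring)⟩

theorem stmt_8 (q : ℕ) (hq : q.Prime) (l : ℕ) (hl : 2 ≤ l) (β : ℤ) :
    ZKS (q ^ l) β ↔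
      β ≠ 0 ∧ β ≠ (q : ℤ) ^ l ∧
        ∃ d : ℤ, 0 < d ∧ d ∣ ((q : ℤ) ^ l - q) ∧ (β = q + d ∨ β = q - d) := by
  rw [zks_prime_pow_iff hq (by omega), exists_pos_dvd_and_eq_add_or_sub_iff]
  refine and_congr_right fun _ => and_congr_right fun hβN => ⟨fun hdvd => ⟨?_, hdvd⟩, And.right⟩
  rintro rfl
  rw [sub_self, zero_dvd_iff, sub_eq_zero] at hdvd
  exact hβN hdvd.symm
end

section
/- Let q be a prime number, l ≥ 2 an integer, β an integer with β ≠ 0 and β ≠ qˡ, and s ≥ 2 an integer with gcd(s, β − q) = 1. Then β ∈ ℤ-KS(qˡ) if and only if the rational number α = q + (β − q)/s belongs to ℚ-KS(qˡ). -/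
theorem Rat.ne_natCast_of_one_lt_den {α : ℚ} (h : 1 < α.den) (n : ℕ) : α ≠ n := by
  rintro rfl
  simp at h

namespace Korselt

variable {q β s : ℤ}

theorem isCoprime_mul_add (h : IsCoprime s (β - q)) : IsCoprime (q * s + (β - q)) s := by
  simpa [add_comm, mul_comm] using h.symm.add_mul_left_left q

theorem add_div_eq_div (hs : s ≠ 0) :
    (q + (β - q) / s : ℚ) = ((q * s + (β - q) : ℤ) : ℚ) / s := by
  push_cast
  field_simp

theorem num_add_div (hs : 0 < s) (h : IsCoprime s (β - q)) :
    (q + (β - q) / s : ℚ).num = q * s + (β - q) := by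
  rw [add_div_eq_div hs.ne']
  exact Rat.num_div_eq_of_coprime hs (Int.isCoprime_iff_gcd_eq_one.mp (isCoprime_mul_add h))

theorem den_add_div (hs : 0 < s) (h : IsCoprime s (β - q)) :
    ((q + (β - q) / s : ℚ).den : ℤ) = s := by
  rw [add_div_eq_div hs.ne']
  exact Rat.den_div_eq_of_coprime hs (Int.isCoprime_iff_gcd_eq_one.mp (isCoprime_mul_add h))

theorem sub_dvd_sub_iff_den_mul_sub_num_dvd (N : ℤ) (h : IsCoprime s (β - q)) :
    (q - β) ∣ (N - β) ↔ (s * q - (q * s + (β - q))) ∣ (s * N - (q * s + (β - q))) := by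
  have hcop : IsCoprime (q - β) s := by simpa using h.symm.neg_left
  rw [show N - β = (N - q) + (q - β) by ring, show s * q - (q * s + (β - q)) = q - β by ring,
    show s * N - (q * s + (β - q)) = s * (N - q) + (q - β) by ring, dvd_add_self_right,
    dvd_add_self_right]
  exact ⟨fun hd => hd.mul_left s, hcop.dvd_of_dvd_mul_left⟩

end Korselt

open Korselt in
theorem stmt_9_general (q : ℕ) (hq : q.Prime) (l : ℕ) (β : ℤ)
    (hβ0 : β ≠ 0) (hβN : β ≠ (q : ℤ) ^ l) (s : ℤ) (hs : 2 ≤ s)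
    (hcop : Int.gcd s (β - q) = 1) :
    ZKS (q ^ l) β ↔ QKS (q ^ l) ((q : ℚ) + ((β : ℚ) - q) / (s : ℚ)) := by
  have hcop' : IsCoprime s (β - q) := Int.isCoprime_iff_gcd_eq_one.mpr hcop
  rw [show (q : ℚ) = ((q : ℤ) : ℚ) by norm_cast]
  have hnum := num_add_div (by omega) hcop'
  have hden := den_add_div (by omega) hcop'
  have hden_gt : 1 < ((q : ℤ) + (β - (q : ℤ)) / s : ℚ).den := by omega
  refine and_congr (iff_of_true hβ0 (by simpa using Rat.ne_natCast_of_one_lt_den hden_gt 0)) <|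
    and_congr (iff_of_true (by exact_mod_cast hβN) (Rat.ne_natCast_of_one_lt_den hden_gt _)) <|
    forall₃_congr fun p hp hpl => ?_
  obtain rfl : p = q := (Nat.prime_dvd_prime_iff_eq hp hq).mp (hp.dvd_of_dvd_pow hpl)
  rw [hnum, hden]
  exact sub_dvd_sub_iff_den_mul_sub_num_dvd _ hcop'

theorem stmt_9 (q : ℕ) (hq : q.Prime) (l : ℕ) (hl : 2 ≤ l) (β : ℤ)
    (hβ0 : β ≠ 0) (hβN : β ≠ (q : ℤ) ^ l) (s : ℤ) (hs : 2 ≤ s)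
    (hcop : Int.gcd s (β - q) = 1) :
    ZKS (q ^ l) β ↔ QKS (q ^ l) ((q : ℚ) + ((β : ℚ) - q) / (s : ℚ)) :=
  stmt_9_general q hq l β hβ0 hβN s hs hcop
end

section
/- Let q be a prime number, l ≥ 2 an integer, and let α ∈ ℚ-KS(qˡ) be a rational number with α ∉ {0, 1, −1} and gcd(α.num, q) = 1. Writing α₁ = α.num and α₂ = α.den, one has q ≤ α + |α·α₁^{l−2} − α₂^{l−2}| (an inequality of rational numbers). -/
theorem sub_dvd_pow_sub_pow_of_sub_dvd {R : Type*} [CommRing R] {a b q : R}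
    (hab : IsCoprime a b) (haq : IsCoprime a q) (k : ℕ)
    (h : b * q - a ∣ b * q ^ (k + 1) - a) : b * q - a ∣ a ^ k - b ^ k := by
  have hcop : IsCoprime (b * q - a) a := by
    simpa using (IsCoprime.sub_mul_left_left_iff (z := 1)).mpr (hab.mul_right haq).symm
  refine hcop.dvd_of_dvd_mul_left ?_
  have hcombo := dvd_sub (h.mul_left (b ^ k)) (sub_dvd_pow_sub_pow (b * q) a (k + 1))
  convert hcombo using 1
  ring

theorem Int.le_add_abs_of_sub_dvd {x y z : ℤ} (h : x - y ∣ z) (hz : z ≠ 0) : x ≤ y + |z| := by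
  rcases le_or_gt x y with hxy | hxy
  · linarith [abs_nonneg z]
  · linarith [Int.le_of_dvd (abs_pos.mpr hz) ((dvd_abs _ _).mpr h)]

theorem Rat.num_pow_sub_den_pow_ne_zero {α : ℚ} (h1 : α ≠ 1) (hm1 : α ≠ -1) {n : ℕ}
    (hn : n ≠ 0) : α.num ^ n - (α.den : ℤ) ^ n ≠ 0 := by
  intro h
  have hpow : α ^ n = 1 := by
    rw [← Rat.num_div_den α, div_pow, div_eq_one_iff_eq (by positivity)]
    exact_mod_cast sub_eq_zero.mp h
  rcases (pow_eq_one_iff_of_ne_zero hn).mp hpow with h' | ⟨h', -⟩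
  exacts [h1 h', hm1 h']

theorem Rat.mul_num_pow_sub_den_pow (α : ℚ) (k : ℕ) :
    α * (α.num : ℚ) ^ k - (α.den : ℚ) ^ k =
      ((α.num : ℚ) ^ (k + 1) - (α.den : ℚ) ^ (k + 1)) / α.den := by
  rw [eq_div_iff (by positivity)]
  linear_combination (α.num : ℚ) ^ k * Rat.mul_den_eq_num α

theorem stmt_10_general (q : ℕ) (hq : q.Prime) (l : ℕ) (hl : 2 ≤ l) (α : ℚ)
    (hα : QKS (q ^ l) α) (h1 : α ≠ 1) (hm1 : α ≠ -1)
    (hcop : Int.gcd α.num (q : ℤ) = 1) :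
    (q : ℚ) ≤ α + |α * (α.num : ℚ) ^ (l - 2) - (α.den : ℚ) ^ (l - 2)| := by
  obtain ⟨k, rfl⟩ : ∃ k, l = k + 2 := ⟨l - 2, by omega⟩
  have hkorselt : (α.den : ℤ) * q - α.num ∣ (α.den : ℤ) * (q : ℤ) ^ (k + 1 + 1) - α.num := by
    exact_mod_cast hα.2.2 q hq (dvd_pow_self q (by omega))
  have hdvd := sub_dvd_pow_sub_pow_of_sub_dvd
    (Int.isCoprime_iff_gcd_eq_one.mpr (by exact α.reduced))
    (Int.isCoprime_iff_gcd_eq_one.mpr hcop) (k + 1) hkorselt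
  have hint := Int.le_add_abs_of_sub_dvd hdvd (Rat.num_pow_sub_den_pow_ne_zero h1 hm1 k.succ_ne_zero)
  have hrat : (α.den : ℚ) * q ≤ α * α.den + |(α.num : ℚ) ^ (k + 1) - (α.den : ℚ) ^ (k + 1)| := by
    rw [Rat.mul_den_eq_num]
    exact_mod_cast hint
  have hden : (0 : ℚ) < α.den := by positivity
  rw [Nat.add_sub_cancel, Rat.mul_num_pow_sub_den_pow, abs_div, Nat.abs_cast, ← sub_le_iff_le_add',
    le_div_iff₀ hden]
  linarith

theorem stmt_10 (q : ℕ) (hq : q.Prime) (l : ℕ) (hl : 2 ≤ l) (α : ℚ)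
    (hα : QKS (q ^ l) α) (h0 : α ≠ 0) (h1 : α ≠ 1) (hm1 : α ≠ -1)
    (hcop : Int.gcd α.num (q : ℤ) = 1) :
    (q : ℚ) ≤ α + |α * (α.num : ℚ) ^ (l - 2) - (α.den : ℚ) ^ (l - 2)| :=
  stmt_10_general q hq l hl α hα h1 hm1 hcop
end

section
/- For every nonzero rational number α, the set of natural numbers N such that N = p^k for some prime p and some integer k ≥ 2 with p not dividing α.num and α ∈ ℚ-KS(N) is infinite. -/
/-!
Fix a prime `p ∤ α.num`. Then `m = α.den * p - α.num` is coprime to `p`, so by Euler's theorem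
`p ^ k ≡ p [ZMOD m]` whenever `k ≡ 1` modulo `φ |m|`, and for such `k` we get
`α.den * p ^ k - α.num ≡ α.den * p - α.num ≡ 0 [ZMOD m]`: `α` is a `p ^ k`-Korselt base.
-/

open scoped Nat

theorem Int.ModEq.pow_totient {x m : ℤ} (h : IsCoprime x m) : x ^ φ m.natAbs ≡ 1 [ZMOD m] := by
  have hunit : IsUnit (x : ZMod m.natAbs) :=
    (ZMod.coe_int_isUnit_iff_isCoprime x m.natAbs).mpr (by simpa using h.symm.abs_left)
  have hpow : (x : ZMod m.natAbs) ^ φ m.natAbs = 1 := by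
    rw [← hunit.unit_spec, ← Units.val_pow_eq_pow_val, ZMod.pow_totient, Units.val_one]
  refine Int.ModEq.of_dvd Int.dvd_natAbs_self ((ZMod.intCast_eq_intCast_iff _ _ _).mp ?_)
  push_cast
  exact hpow

theorem Int.exists_prime_not_dvd {n : ℤ} (hn : n ≠ 0) : ∃ p : ℕ, p.Prime ∧ ¬ (p : ℤ) ∣ n := by
  obtain ⟨p, hle, hp⟩ := Nat.exists_infinite_primes (n.natAbs + 1)
  refine ⟨p, hp, fun hdvd => ?_⟩
  have := Nat.le_of_dvd (Int.natAbs_pos.mpr hn) (Int.natCast_dvd.mp hdvd)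
  omega

section KorseltBase

variable {α : ℚ} {p : ℕ}

theorem not_dvd_den_mul_sub_num (hpα : ¬ (p : ℤ) ∣ α.num) :
    ¬ (p : ℤ) ∣ α.den * p - α.num := by
  rwa [dvd_sub_right (dvd_mul_left _ _)]

theorem qks_pow_totient_mul_add_one (hα : α ≠ 0) (hp : p.Prime) (hpα : ¬ (p : ℤ) ∣ α.num)
    (j : ℕ) : QKS (p ^ (φ (α.den * p - α.num : ℤ).natAbs * j + 1)) α := by
  set m : ℤ := α.den * p - α.num
  have hcop : IsCoprime (p : ℤ) m :=
    (Nat.prime_iff_prime_int.mp hp).coprime_iff_not_dvd.mpr (not_dvd_den_mul_sub_num hpα)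
  refine ⟨hα, fun heq => ?_, fun q hq hqdvd => ?_⟩
  · have hnum : α.num = (p : ℤ) ^ (φ m.natAbs * j + 1) := by
      simpa using congrArg Rat.num heq
    exact hpα (hnum ▸ dvd_pow_self _ (Nat.succ_ne_zero _))
  · obtain rfl := (Nat.prime_dvd_prime_iff_eq hq hp).mp (hq.dvd_of_dvd_pow hqdvd)
    have hpow : (q : ℤ) ^ (φ m.natAbs * j + 1) ≡ q [ZMOD m] := by
      simpa [pow_succ, pow_mul] using ((Int.ModEq.pow_totient hcop).pow j).mul_right (q : ℤ)
    have hm : m ≡ 0 [ZMOD m] := Int.modEq_zero_iff_dvd.mpr dvd_rfl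
    refine Int.modEq_zero_iff_dvd.mp ?_
    push_cast
    exact ((hpow.mul_left _).sub_right _).trans hm

end KorseltBase

theorem stmt_12 (α : ℚ) (hα : α ≠ 0) :
    {N : ℕ | ∃ p k : ℕ, p.Prime ∧ 2 ≤ k ∧ ¬ ((p : ℤ) ∣ α.num) ∧ N = p ^ k ∧
      QKS N α}.Infinite := by
  obtain ⟨p, hp, hpα⟩ := Int.exists_prime_not_dvd (Rat.num_ne_zero.mpr hα)
  set m : ℤ := α.den * p - α.num with hm
  have hφ : 0 < φ m.natAbs := Nat.totient_pos.mpr <| Int.natAbs_pos.mpr fun h0 =>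
    not_dvd_den_mul_sub_num hpα (by rw [← hm, h0]; exact dvd_zero _)
  refine Set.infinite_of_injective_forall_mem (f := fun j => p ^ (φ m.natAbs * (j + 1) + 1))
    (fun a b hab => ?_)
    fun j => ⟨p, _, hp, ?_, hpα, rfl, qks_pow_totient_mul_add_one hα hp hpα (j + 1)⟩
  · have hab' : a + 1 = b + 1 := Nat.eq_of_mul_eq_mul_left hφ
      (Nat.succ_injective (Nat.pow_right_injective hp.two_le hab))
    omega
  · nlinarith
end

section
/- Let q be a prime number and l ≥ 2 an integer. For every positive integer s dividing l − 1 such that (l − 1)/s is even, the rational number −1/q^{s−1} belongs to ℚ-KS(qˡ). -/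
theorem qks_prime_pow_of_dvd {q : ℕ} (hq : q.Prime) (l : ℕ) {α : ℚ} (h0 : α ≠ 0)
    (hN : α ≠ ((q ^ l : ℕ) : ℚ))
    (hdvd : ((α.den : ℤ) * q - α.num) ∣ ((α.den : ℤ) * (q ^ l : ℕ) - α.num)) :
    QKS (q ^ l) α := by
  refine ⟨h0, hN, fun p hp hpq => ?_⟩
  obtain rfl : p = q := (Nat.prime_dvd_prime_iff_eq hp hq).mp (hp.dvd_of_dvd_pow hpq)
  exact hdvd

theorem pow_add_one_dvd_pow_mul_add_one {R : Type*} [CommRing R] (a : R) (s : ℕ) {m : ℕ}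
    (hm : Odd m) : a ^ s + 1 ∣ a ^ (s * m) + 1 := by
  simpa only [pow_mul, one_pow] using hm.add_dvd_pow_add_pow (a ^ s) 1

theorem num_neg_inv_natCast_of_pos {d : ℕ} (hd : 0 < d) : (-(d : ℚ)⁻¹).num = -1 := by
  rw [Rat.num_neg_eq_neg_num, Rat.inv_natCast_num_of_pos hd]

theorem den_neg_inv_natCast_of_pos {d : ℕ} (hd : 0 < d) : (-(d : ℚ)⁻¹).den = d := by
  rw [Rat.den_neg_eq_den, Rat.inv_natCast_den_of_pos hd]

theorem stmt_15 (q : ℕ) (hq : q.Prime) (l : ℕ) (hl : 2 ≤ l) (s : ℕ)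
    (hs : 1 ≤ s) (hdvd : s ∣ (l - 1)) (heven : Even ((l - 1) / s)) :
    QKS (q ^ l) (-1 / (q : ℚ) ^ (s - 1)) := by
  have hd : 0 < q ^ (s - 1) := pow_pos hq.pos _
  have hα : -1 / (q : ℚ) ^ (s - 1) = -((q ^ (s - 1) : ℕ) : ℚ)⁻¹ := by push_cast; ring
  have hneg : -((q ^ (s - 1) : ℕ) : ℚ)⁻¹ < 0 := by
    simpa only [Left.neg_neg_iff, inv_pos, Nat.cast_pos] using hd
  rw [hα]
  refine qks_prime_pow_of_dvd hq l hneg.ne (hneg.trans_le (Nat.cast_nonneg _)).ne ?_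
  rw [num_neg_inv_natCast_of_pos hd, den_neg_inv_natCast_of_pos hd]
  obtain ⟨k, hk⟩ := hdvd
  have hodd : Odd (k + 1) := by
    rw [hk, Nat.mul_div_cancel_left _ hs] at heven
    exact heven.add_one
  have hleft : (q : ℤ) ^ (s - 1) * q = (q : ℤ) ^ s := by
    rw [← pow_succ, Nat.sub_add_cancel hs]
  have hright : (q : ℤ) ^ (s - 1) * q ^ l = (q : ℤ) ^ (s * (k + 1)) := by
    rw [← pow_add]
    congr 1
    rw [Nat.mul_succ, ← hk]
    omega
  push_cast
  rw [sub_neg_eq_add, sub_neg_eq_add, hleft, hright]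
  exact pow_add_one_dvd_pow_mul_add_one _ s hodd
end

section
/- Let p and q be two distinct prime numbers and let l ≥ 1 be an integer. Then 1/p ∈ ℚ-KS(qˡ) if and only if 1/q ∈ ℚ-KS(pˡ). -/
theorem pow_eq_one_iff_of_mul_eq_one {M : Type*} [CommMonoid M] {a b : M} (h : a * b = 1)
    (k : ℕ) : a ^ k = 1 ↔ b ^ k = 1 := by
  have hk : a ^ k * b ^ k = 1 := by rw [← mul_pow, h, one_pow]
  constructor <;> intro h' <;> simpa [h'] using hk

theorem mul_pow_succ_eq_one_iff_of_mul_eq_one {M : Type*} [CommMonoid M] {a b : M}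
    (h : a * b = 1) (k : ℕ) : a * b ^ (k + 1) = 1 ↔ b * a ^ (k + 1) = 1 := by
  have hab : a * b ^ (k + 1) = b ^ k := by rw [pow_succ', ← mul_assoc, h, one_mul]
  have hba : b * a ^ (k + 1) = a ^ k := by rw [pow_succ', ← mul_assoc, mul_comm b, h, one_mul]
  rw [hab, hba, pow_eq_one_iff_of_mul_eq_one h]

theorem dvd_mul_pow_succ_sub_one_comm {R : Type*} [CommRing R] (a b : R) (k : ℕ) :
    a * b - 1 ∣ a * b ^ (k + 1) - 1 ↔ a * b - 1 ∣ b * a ^ (k + 1) - 1 := by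
  let π := Ideal.Quotient.mk (Ideal.span {a * b - 1})
  have dvd_sub_one_iff (x : R) : a * b - 1 ∣ x - 1 ↔ π x = 1 := by
    rw [← Ideal.Quotient.eq_zero_iff_dvd, map_sub, map_one, sub_eq_zero]
  have hπ : π a * π b = 1 := by rw [← map_mul, ← dvd_sub_one_iff]
  simp only [dvd_sub_one_iff, map_mul, map_pow]
  exact mul_pow_succ_eq_one_iff_of_mul_eq_one hπ k

theorem qks_prime_pow_one_div_iff {p q l : ℕ} (hp : 1 < p) (hq : q.Prime) (hl : l ≠ 0) :
    QKS (q ^ l) (1 / (p : ℚ)) ↔ (p * q - 1 : ℤ) ∣ p * q ^ l - 1 := by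
  have hden : (1 / (p : ℚ)).den = p := by rw [one_div]; exact Rat.inv_natCast_den_of_pos (by omega)
  have hnum : (1 / (p : ℚ)).num = 1 := by rw [one_div]; exact Rat.inv_natCast_num_of_pos (by omega)
  have hne : 1 / (p : ℚ) ≠ (q ^ l : ℕ) := by
    have hlt : 1 / (p : ℚ) < 1 := by rw [div_lt_one (by positivity)]; exact_mod_cast hp
    have hle : (1 : ℚ) ≤ (q ^ l : ℕ) := by exact_mod_cast Nat.one_le_pow l q hq.pos
    exact (hlt.trans_le hle).ne
  have prime_dvd_iff (r : ℕ) (hr : r.Prime) : r ∣ q ^ l ↔ r = q :=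
    ⟨fun h ↦ (Nat.prime_dvd_prime_iff_eq hr hq).mp (hr.dvd_of_dvd_pow h),
      fun h ↦ h ▸ dvd_pow_self r hl⟩
  simp only [QKS, hden, hnum]
  constructor
  · rintro ⟨-, -, h⟩
    simpa using h q hq ((prime_dvd_iff q hq).mpr rfl)
  · intro h
    refine ⟨by positivity, hne, fun r hr hrq ↦ ?_⟩
    rw [(prime_dvd_iff r hr).mp hrq]
    simpa using h

theorem stmt_16_general (p q : ℕ) (hp : p.Prime) (hq : q.Prime)
    (l : ℕ) (hl : 1 ≤ l) :
    QKS (q ^ l) (1 / (p : ℚ)) ↔ QKS (p ^ l) (1 / (q : ℚ)) := by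
  obtain ⟨k, rfl⟩ := Nat.exists_eq_add_of_le' hl
  rw [qks_prime_pow_one_div_iff hp.one_lt hq (by omega),
    qks_prime_pow_one_div_iff hq.one_lt hp (by omega), mul_comm (q : ℤ)]
  exact dvd_mul_pow_succ_sub_one_comm _ _ k

theorem stmt_16 (p q : ℕ) (hp : p.Prime) (hq : q.Prime) (hpq : p ≠ q)
    (l : ℕ) (hl : 1 ≤ l) :
    QKS (q ^ l) (1 / (p : ℚ)) ↔ QKS (p ^ l) (1 / (q : ℚ)) :=
  stmt_16_general p q hp hq l hl
end

section
/- Let p and q be two distinct prime numbers and let l ≥ 1 be an odd integer. Then −1/p ∈ ℚ-KS(qˡ) if and only if −1/q ∈ ℚ-KS(pˡ). -/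
theorem mul_pow_eq_neg_one_iff_of_mul_eq_neg_one {R : Type*} [CommRing R] {a b : R}
    (hab : a * b = -1) {l : ℕ} (hl : Odd l) :
    a * b ^ l = -1 ↔ b * a ^ l = -1 := by
  obtain ⟨n, rfl⟩ := hl
  have hsq : a ^ 2 * b ^ 2 = 1 := by rw [← mul_pow, hab]; norm_num
  have ha : a * b ^ (2 * n + 1) = -(b ^ 2) ^ n := by
    rw [pow_succ, pow_mul, mul_left_comm, hab]; ring
  have hb : b * a ^ (2 * n + 1) = -(a ^ 2) ^ n := by
    rw [pow_succ, pow_mul, mul_left_comm, mul_comm b a, hab]; ring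
  have hinv : (a ^ 2) ^ n * (b ^ 2) ^ n = 1 := by rw [← mul_pow, hsq, one_pow]
  rw [ha, hb, neg_inj, neg_inj]
  constructor
  · intro h; simpa [h] using hinv
  · intro h; simpa [h] using hinv

theorem mul_add_one_dvd_mul_pow_add_one_comm {R : Type*} [CommRing R] (a b : R) {l : ℕ}
    (hl : Odd l) :
    a * b + 1 ∣ a * b ^ l + 1 ↔ a * b + 1 ∣ b * a ^ l + 1 := by
  let π := Ideal.Quotient.mk (Ideal.span {a * b + 1})
  have hdvd (x : R) : a * b + 1 ∣ x + 1 ↔ π x = -1 := by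
    rw [← Ideal.Quotient.eq_zero_iff_dvd, map_add, map_one, add_eq_zero_iff_eq_neg]
  have hab : π a * π b = -1 := by rw [← map_mul, ← hdvd]
  rw [hdvd, hdvd, map_mul, map_mul, map_pow, map_pow]
  exact mul_pow_eq_neg_one_iff_of_mul_eq_neg_one hab hl

theorem Rat.num_neg_one_div_natCast {p : ℕ} (hp : 0 < p) : (-1 / (p : ℚ)).num = -1 := by
  exact_mod_cast Rat.num_div_eq_of_coprime (a := -1) (b := p) (by exact_mod_cast hp)
    (by simp)

theorem Rat.den_neg_one_div_natCast {p : ℕ} (hp : 0 < p) : (-1 / (p : ℚ)).den = p := by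
  exact_mod_cast Rat.den_div_eq_of_coprime (a := -1) (b := p) (by exact_mod_cast hp)
    (by simp)

theorem qks_prime_pow_neg_one_div_iff {p q l : ℕ} (hp : 0 < p) (hq : q.Prime) (hl : l ≠ 0) :
    QKS (q ^ l) (-1 / (p : ℚ)) ↔ (p : ℤ) * q + 1 ∣ p * q ^ l + 1 := by
  have hlinear (r : ℕ) : ((-1 / (p : ℚ)).den * (r : ℤ) - (-1 / (p : ℚ)).num)
      = p * r + 1 := by
    rw [Rat.num_neg_one_div_natCast hp, Rat.den_neg_one_div_natCast hp]; ring
  have hneg : -1 / (p : ℚ) < 0 := div_neg_of_neg_of_pos (by norm_num) (by exact_mod_cast hp)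
  have hne_zero : -1 / (p : ℚ) ≠ 0 := hneg.ne
  have hne_pow : -1 / (p : ℚ) ≠ ((q ^ l : ℕ) : ℚ) := (hneg.trans_le (Nat.cast_nonneg _)).ne
  simp only [QKS, hlinear, ne_eq, hne_zero, hne_pow, not_false_eq_true, true_and]
  push_cast
  constructor
  · exact fun h => h q hq (dvd_pow_self q hl)
  · intro h r hr hrq
    rwa [(Nat.prime_dvd_prime_iff_eq hr hq).mp (hr.dvd_of_dvd_pow hrq)]

theorem stmt_17_general (p q : ℕ) (hp : p.Prime) (hq : q.Prime)
    (l : ℕ) (hodd : Odd l) :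
    QKS (q ^ l) (-1 / (p : ℚ)) ↔ QKS (p ^ l) (-1 / (q : ℚ)) := by
  rw [qks_prime_pow_neg_one_div_iff hp.pos hq hodd.pos.ne',
    qks_prime_pow_neg_one_div_iff hq.pos hp hodd.pos.ne', mul_comm (q : ℤ) p]
  exact mul_add_one_dvd_mul_pow_add_one_comm _ _ hodd

theorem stmt_17 (p q : ℕ) (hp : p.Prime) (hq : q.Prime) (hpq : p ≠ q)
    (l : ℕ) (hl : 1 ≤ l) (hodd : Odd l) :
    QKS (q ^ l) (-1 / (p : ℚ)) ↔ QKS (p ^ l) (-1 / (q : ℚ)) :=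
  stmt_17_general p q hp hq l hodd
end
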